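/- arXiv:1307.0366 — 2 statements merged into one kernel-verified Lean document; each statement's English description precedes it below -/
import Mathlib

section
/- If a probability distribution P on variables X_1,...,X_p satisfies the intersection axiom for conditional independence, and X_i is conditionally independent of X_d given (D \ {d}) ∪ A for every d in a finite set D (where A is disjoint from D ∪ {i}), then X_i is conditionally independent of the entire collection X_D given X_A. -/
/-- For a conditional independence relation `CI i B S` (“`X_i` is conditionally
independent of the collection `X_B` given `X_S`”) satisfying the intersection
axiom, if `X_i ⫫ X_d | (D \ {d}) ∪ A` for every `d` in a finite set `D`
(with `A` disjoint from `D ∪ {i}`), then `X_i ⫫ X_D | X_A`. -/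
theorem sp_intersection_induction {V : Type*} [DecidableEq V]
    (CI : V → Finset V → Finset V → Prop)
    (intersection : ∀ (i : V) (Y W Z : Finset V),
      CI i Y (Z ∪ W) → CI i W (Z ∪ Y) → CI i (Y ∪ W) Z)
    (i : V) (D A : Finset V) (hD : D.Nonempty) (hiD : i ∉ D)
    (hdisj : Disjoint A (insert i D))
    (h : ∀ d ∈ D, CI i {d} ((D.erase d) ∪ A)) :
    CI i D A := by
  classical
  obtain ⟨n, hc⟩ : ∃ n, D.card = n := ⟨_, rfl⟩
  induction n generalizing D A with
  | zero =>
    rw [Finset.card_eq_zero] at hc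
    subst hc
    exact absurd hD (by simp)
  | succ n IH =>
    obtain ⟨d, hd⟩ := hD
    by_cases hD' : (D.erase d).Nonempty
    · have hdi : d ≠ i := fun hdi => hiD (hdi ▸ hd)
      have hiD' : i ∉ D.erase d := fun hm => hiD (Finset.mem_of_mem_erase hm)
      have hdisj' : Disjoint (A ∪ {d}) (insert i (D.erase d)) := by
        rw [Finset.disjoint_left]
        intro x hx hx'
        rcases Finset.mem_union.mp hx with hxa | hxd
        · exact (Finset.disjoint_left.mp hdisj hxa)
            (by rcases Finset.mem_insert.mp hx' with h1 | h1
                · exact h1 ▸ Finset.mem_insert_self i D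
                · exact Finset.mem_insert_of_mem (Finset.mem_of_mem_erase h1))
        · have hxd : x = d := Finset.mem_singleton.mp hxd
          rw [hxd] at hx'
          rcases Finset.mem_insert.mp hx' with h1 | h1
          · exact hdi h1
          · exact (Finset.notMem_erase d D) h1
      have hkey : ∀ e ∈ D.erase d,
          ((D.erase d).erase e) ∪ (A ∪ {d}) = (D.erase e) ∪ A := by
        intro e he
        have hed : e ≠ d := Finset.ne_of_mem_erase he
        ext x
        simp only [Finset.mem_union, Finset.mem_erase, Finset.mem_singleton]
        constructor
        · rintro (⟨hxe, _, hxD⟩ | hxa | rfl)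
          · exact Or.inl ⟨hxe, hxD⟩
          · exact Or.inr hxa
          · exact Or.inl ⟨Ne.symm hed, hd⟩
        · rintro (⟨hxe, hxD⟩ | hxa)
          · by_cases hxd : x = d
            · exact Or.inr (Or.inr hxd)
            · exact Or.inl ⟨hxe, hxd, hxD⟩
          · exact Or.inr (Or.inl hxa)
      have h' : ∀ e ∈ D.erase d, CI i {e} (((D.erase d).erase e) ∪ (A ∪ {d})) := by
        intro e he
        rw [hkey e he]
        exact h e (Finset.mem_of_mem_erase he)
      have hcard : (D.erase d).card = n := by
        rw [Finset.card_erase_of_mem hd, hc]; rfl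
      have h1 : CI i (D.erase d) (A ∪ {d}) :=
        IH (D.erase d) (A ∪ {d}) hD' hiD' hdisj' h' hcard
      have h2 : CI i {d} (A ∪ D.erase d) := by
        rw [Finset.union_comm]; exact h d hd
      have h3 := intersection i (D.erase d) {d} A h1 h2
      have : D.erase d ∪ {d} = D := by
        ext x
        simp only [Finset.mem_union, Finset.mem_erase, Finset.mem_singleton]
        constructor
        · rintro (⟨_, hxD⟩ | rfl) <;> [exact hxD; exact hd]
        · intro hx
          by_cases hxd : x = d
          · exact Or.inr hxd
          · exact Or.inl ⟨hxd, hx⟩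
      rwa [this] at h3
    · rw [Finset.not_nonempty_iff_eq_empty] at hD'
      have hDd : D = {d} := by
        ext x
        constructor
        · intro hx
          by_contra hxd
          have : x ∈ D.erase d := Finset.mem_erase.mpr ⟨fun hh => hxd (by simp [hh]), hx⟩
          simp [hD'] at this
        · intro hx
          rw [Finset.mem_singleton] at hx
          exact hx ▸ hd
      have := h d hd
      rw [hD'] at this
      rw [hDd]
      simpa using this
end

section
/- For any permutation π, the DAG G_π is minimal: no proper sub-DAG of G_π (same vertices, strictly fewer edges) satisfies the local Markov condition with respect to the given CI model. -/
/-! If `G'` drops an edge `π j → π k` of `G_π`, then `π` still orders `G'`, so the predecessors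
of `π k` contain its `G'`-parents and consist of non-descendants of `π k`, and `π j` is one of
them that is not a parent. Local Markov at `π k`, decomposition and weak union then give
`π k ⫫ π j | pred(π k) \ {π j}`, which is exactly the dependence that put the edge into `G_π`. -/

open scoped Classical

structure DAG (p : ℕ) where
  edges : Finset (Fin p × Fin p)
  acyclic : ∃ σ : Equiv.Perm (Fin p), ∀ e ∈ edges, σ.symm e.1 < σ.symm e.2

namespace DAG

variable {p : ℕ}

def edgeRel (G : DAG p) (a b : Fin p) : Prop := (a, b) ∈ G.edges

/-- the parents of a vertex -/
def parents (G : DAG p) (i : Fin p) : Finset (Fin p) :=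
  Finset.univ.filter (fun a => (a, i) ∈ G.edges)

/-- the (strict) descendants of a vertex -/
noncomputable def descendants (G : DAG p) (i : Fin p) : Finset (Fin p) :=
  Finset.univ.filter (fun k => Relation.TransGen G.edgeRel i k)

/-- the non-descendants of a vertex (excluding the vertex itself) -/
noncomputable def nonDescendants (G : DAG p) (i : Fin p) : Finset (Fin p) :=
  (Finset.univ.erase i) \ G.descendants i

end DAG

/-- A set-valued conditional independence model: `CI A B S` means `X_A ⫫ X_B | X_S`. -/
abbrev SetCIModel (p : ℕ) := Finset (Fin p) → Finset (Fin p) → Finset (Fin p) → Prop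

variable {p : ℕ}

/-- the local Markov condition: every vertex is conditionally independent of its
non-descendants given its parents -/
def LocalMarkov (G : DAG p) (CI : SetCIModel p) : Prop :=
  ∀ j : Fin p, CI {j} (G.nonDescendants j \ G.parents j) (G.parents j)

def predSet (π : Equiv.Perm (Fin p)) (k : Fin p) : Finset (Fin p) :=
  (Finset.univ.filter (fun m => m < k)).image π

/-- The minimal I-map `G_π` built from a set-valued CI model: for `j < k`, edge
`π j → π k` iff `π j` and `π k` are conditionally dependent given the remaining
predecessors `{π 0, …, π (k-1)} \ {π j}`. -/
noncomputable def minimalIMap (CI : SetCIModel p) (π : Equiv.Perm (Fin p)) : DAG p where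
  edges := Finset.univ.filter (fun q : Fin p × Fin p =>
    ∃ j k : Fin p, j < k ∧ q = (π j, π k) ∧
      ¬ CI {π j} {π k} ((predSet π k).erase (π j)))
  acyclic := ⟨π, by
    intro e he
    rw [Finset.mem_filter] at he
    obtain ⟨-, j, k, hjk, rfl, -⟩ := he
    simpa using hjk⟩

theorem mem_predSet {π : Equiv.Perm (Fin p)} {k x : Fin p} :
    x ∈ predSet π k ↔ π.symm x < k := by
  simp only [predSet, Finset.mem_image, Finset.mem_filter, Finset.mem_univ, true_and]
  exact ⟨fun ⟨m, hm, hx⟩ => hx ▸ by simpa using hm, fun hx => ⟨π.symm x, hx, by simp⟩⟩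

namespace DAG

def IsOrderedBy (G : DAG p) (π : Equiv.Perm (Fin p)) : Prop :=
  ∀ e ∈ G.edges, π.symm e.1 < π.symm e.2

variable {G G' : DAG p} {π : Equiv.Perm (Fin p)}

theorem IsOrderedBy.mono (h : G.IsOrderedBy π) (hsub : G'.edges ⊆ G.edges) :
    G'.IsOrderedBy π :=
  fun e he => h e (hsub he)

theorem IsOrderedBy.lt_of_transGen (h : G.IsOrderedBy π) {a b : Fin p}
    (hab : Relation.TransGen G.edgeRel a b) : π.symm a < π.symm b := by
  induction hab with
  | single hab => exact h _ hab
  | tail _ hbc ih => exact ih.trans (h _ hbc)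

theorem IsOrderedBy.parents_subset_predSet (h : G.IsOrderedBy π) (k : Fin p) :
    G.parents (π k) ⊆ predSet π k := by
  intro x hx
  rw [parents, Finset.mem_filter] at hx
  simpa [mem_predSet] using h _ hx.2

theorem IsOrderedBy.predSet_subset_nonDescendants (h : G.IsOrderedBy π) (k : Fin p) :
    predSet π k ⊆ G.nonDescendants (π k) := by
  intro x hx
  have hxk : π.symm x < k := mem_predSet.1 hx
  simp only [nonDescendants, descendants, Finset.mem_sdiff, Finset.mem_erase,
    Finset.mem_filter, Finset.mem_univ, true_and, and_true]
  refine ⟨fun hxeq => hxk.ne (by simp [hxeq]), fun hdesc => ?_⟩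
  exact hxk.asymm (by simpa using h.lt_of_transGen hdesc)

end DAG

theorem mem_minimalIMap_edges {CI : SetCIModel p} {π : Equiv.Perm (Fin p)} {e : Fin p × Fin p} :
    e ∈ (minimalIMap CI π).edges ↔
      ∃ j k : Fin p, j < k ∧ e = (π j, π k) ∧ ¬ CI {π j} {π k} ((predSet π k).erase (π j)) := by
  simp [minimalIMap]

theorem minimalIMap_isOrderedBy (CI : SetCIModel p) (π : Equiv.Perm (Fin p)) :
    (minimalIMap CI π).IsOrderedBy π := by
  intro e he
  obtain ⟨j, k, hjk, rfl, -⟩ := mem_minimalIMap_edges.1 he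
  simpa using hjk

/-- Decomposition shrinks `N \ Pa` to `P \ Pa`, then weak union moves everything but `a`
into the conditioning set, which becomes `Pa ∪ ((P \ Pa).erase a) = P.erase a`. -/
theorem ci_erase_of_ci_sdiff {CI : SetCIModel p}
    (decomposition : ∀ A B C S, CI A (B ∪ C) S → CI A B S)
    (weakUnion : ∀ A B C S, CI A (B ∪ C) S → CI A B (S ∪ C))
    {A N P Pa : Finset (Fin p)} {a : Fin p} (hci : CI A (N \ Pa) Pa)
    (hPaP : Pa ⊆ P) (hPN : P ⊆ N) (haP : a ∈ P) (haPa : a ∉ Pa) :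
    CI A {a} (P.erase a) := by
  have hP : CI A (P \ Pa) Pa := by
    refine decomposition _ _ ((N \ Pa) \ (P \ Pa)) _ ?_
    rwa [Finset.union_sdiff_of_subset (Finset.sdiff_subset_sdiff hPN le_rfl)]
  have hsplit : P \ Pa = {a} ∪ (P \ Pa).erase a :=
    (Finset.insert_erase (Finset.mem_sdiff.2 ⟨haP, haPa⟩)).symm
  have hcond : Pa ∪ (P \ Pa).erase a = P.erase a := by
    ext x
    by_cases hx : x ∈ Pa
    · simp [hx, hPaP hx, show x ≠ a from fun h => haPa (h ▸ hx)]
    · simp [hx]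
  rw [hsplit] at hP
  simpa only [hcond] using weakUnion _ _ _ _ hP

theorem minimalIMap_minimal_general (CI : SetCIModel p)
    (symmetry : ∀ A B S, CI A B S → CI B A S)
    (decomposition : ∀ A B C S, CI A (B ∪ C) S → CI A B S)
    (weakUnion : ∀ A B C S, CI A (B ∪ C) S → CI A B (S ∪ C))
    (π : Equiv.Perm (Fin p)) :
    ∀ G' : DAG p, G'.edges ⊂ (minimalIMap CI π).edges → ¬ LocalMarkov G' CI := by
  intro G' hsub hLM
  obtain ⟨e, he, he'⟩ := Finset.exists_of_ssubset hsub
  obtain ⟨j, k, hjk, rfl, hdep⟩ := mem_minimalIMap_edges.1 he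
  have hord : G'.IsOrderedBy π := (minimalIMap_isOrderedBy CI π).mono hsub.subset
  have hj_pred : π j ∈ predSet π k := mem_predSet.2 (by simpa using hjk)
  have hj_not_parent : π j ∉ G'.parents (π k) := by
    simpa [DAG.parents] using he'
  exact hdep <| symmetry _ _ _ <|
    ci_erase_of_ci_sdiff decomposition weakUnion (hLM (π k)) (hord.parents_subset_predSet k)
      (hord.predSet_subset_nonDescendants k) hj_pred hj_not_parent

/-- For any permutation `π`, the minimal I-map `G_π` is minimal: no proper sub-DAG
(same vertices, strictly fewer edges) satisfies the local Markov condition with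
respect to the given CI model. -/
theorem minimalIMap_minimal (CI : SetCIModel p)
    (symmetry : ∀ A B S, CI A B S → CI B A S)
    (decomposition : ∀ A B C S, CI A (B ∪ C) S → CI A B S)
    (weakUnion : ∀ A B C S, CI A (B ∪ C) S → CI A B (S ∪ C))
    (contraction : ∀ A B C S, CI A B S → CI A C (S ∪ B) → CI A (B ∪ C) S)
    (intersection : ∀ A B C S, CI A B (S ∪ C) → CI A C (S ∪ B) → CI A (B ∪ C) S)
    (π : Equiv.Perm (Fin p)) :
    ∀ G' : DAG p, G'.edges ⊂ (minimalIMap CI π).edges → ¬ LocalMarkov G' CI :=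
  minimalIMap_minimal_general CI symmetry decomposition weakUnion π
end
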